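/- Let e, s : (0,∞) × (0,∞) → ℝ be twice continuously differentiable and P : (0,∞) × (0,∞) → ℝ be continuously differentiable, satisfying the Gibbs relation ∂_θ e = θ ∂_θ s and ∂_ρ e = θ ∂_ρ s + P/ρ² and the thermodynamic stability conditions ∂_ρ P(ρ,θ) > 0 and ∂_θ e(ρ,θ) > 0 for all ρ, θ > 0. Then for every compact set K = [ρ₀′,ρ₁′] × [θ₀′,θ₁′] ⊂ (0,∞)² there exists c > 0 such that for all (ρ,θ) ∈ K and (ρ′,θ′) ∈ K: |ρ·(s(ρ,θ) − s(ρ′,θ′)) − ρ′·(∂_ρ s(ρ′,θ′)·(ρ − ρ′) + ∂_θ s(ρ′,θ′)·(θ − θ′))| ≤ c·Γ(ρ,θ|ρ′,θ′). -/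

import Mathlib

/-
The left-hand side is the first-order Taylor remainder at `(ρ', θ')` of the `C²` map
`(ρ, θ) ↦ ρ s(ρ, θ)`, hence at most `M ((ρ - ρ')² + (θ - θ')²)` uniformly on the compact convex
box. For the relative entropy write
`Γ = [H_θ'(ρ, θ) - H_θ'(ρ, θ')] + [H_θ'(ρ, θ') - H_θ'(ρ', θ') - ∂_ρ H_θ'(ρ', θ') (ρ - ρ')]`.
By the Gibbs relation `∂_θ H_θ'(ρ, θ) = (ρ ∂_θ e / θ) (θ - θ')`, while `∂_ρ H_θ(ρ, θ)` is the
Gibbs free energy `g = e - θ s + P / ρ`, with `∂_ρ g = ∂_ρ P / ρ`. Thermodynamic stability makes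
`ρ ∂_θ e / θ` and `∂_ρ P / ρ` bounded below on the box by some `m > 0`, so both brackets are at
least `m / 2` times the squared increment, and `c = 2 M / m` works.
-/

/-- Ballistic free energy `H_C(ρ,θ) = ρ e(ρ,θ) − C ρ s(ρ,θ)`. -/
noncomputable def ballisticH (e s : ℝ × ℝ → ℝ) (C ρ θ : ℝ) : ℝ :=
  ρ * e (ρ, θ) - C * (ρ * s (ρ, θ))

/-- Relative entropy
`Γ(ρ,θ|ρ′,θ′) = H_{θ′}(ρ,θ) − ∂_ρ H_{θ′}(ρ′,θ′)·(ρ − ρ′) − H_{θ′}(ρ′,θ′)`. -/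
noncomputable def relEntropy (e s : ℝ × ℝ → ℝ) (ρ θ ρ' θ' : ℝ) : ℝ :=
  ballisticH e s θ' ρ θ -
    deriv (fun r : ℝ => ballisticH e s θ' r θ') ρ' * (ρ - ρ') -
    ballisticH e s θ' ρ' θ'

open Set

lemma IsCompact.exists_pos_forall_le {α : Type*} [TopologicalSpace α] {K : Set α} {f : α → ℝ}
    (hK : IsCompact K) (hf : ContinuousOn f K) (hpos : ∀ x ∈ K, 0 < f x) :
    ∃ m > 0, ∀ x ∈ K, m ≤ f x := by
  rcases K.eq_empty_or_nonempty with rfl | hne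
  · exact ⟨1, one_pos, by simp⟩
  obtain ⟨z, hz, hmin⟩ := hK.exists_isMinOn hne hf
  exact ⟨f z, hpos z hz, fun x hx => hmin hx⟩

lemma ContDiffOn.exists_norm_taylor_remainder_le {E F : Type*} [NormedAddCommGroup E]
    [NormedSpace ℝ E] [NormedAddCommGroup F] [NormedSpace ℝ F] {f : E → F} {U K : Set E}
    (hf : ContDiffOn ℝ 2 f U) (hU : IsOpen U) (hK : IsCompact K) (hKc : Convex ℝ K)
    (hKU : K ⊆ U) :
    ∃ M > 0, ∀ x ∈ K, ∀ y ∈ K, ‖f y - f x - fderiv ℝ f x (y - x)‖ ≤ M * ‖y - x‖ ^ 2 := by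
  obtain ⟨L, hL⟩ := ((hf.fderiv_of_isOpen hU (m := 1) le_rfl).mono hKU).exists_lipschitzOnWith
    one_ne_zero hKc hK
  refine ⟨L + 1, by positivity, fun x hx y hy => ?_⟩
  have hseg : segment ℝ x y ⊆ K := hKc.segment_subset hx hy
  have hbound : ∀ z ∈ segment ℝ x y, ‖fderiv ℝ f z - fderiv ℝ f x‖ ≤ L * ‖y - x‖ := fun z hz =>
    (hL.norm_sub_le (hseg hz) hx).trans (by gcongr; exact norm_sub_le_of_mem_segment hz)
  calc ‖f y - f x - fderiv ℝ f x (y - x)‖ ≤ L * ‖y - x‖ * ‖y - x‖ :=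
        (convex_segment x y).norm_image_sub_le_of_norm_fderiv_le'
          (fun z hz => (hf.differentiableOn two_ne_zero).differentiableAt
            (hU.mem_nhds (hKU (hseg hz)))) hbound (left_mem_segment ℝ x y) (right_mem_segment ℝ x y)
    _ ≤ (L + 1) * ‖y - x‖ ^ 2 := by nlinarith [sq_nonneg ‖y - x‖]

lemma Prod.norm_sq_le_sq_add_sq (a b : ℝ) : ‖(a, b)‖ ^ 2 ≤ a ^ 2 + b ^ 2 := by
  rw [Prod.norm_def, Real.norm_eq_abs, Real.norm_eq_abs]
  rcases max_choice |a| |b| with h | h <;> rw [h, sq_abs] <;> nlinarith [sq_nonneg a, sq_nonneg b]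

lemma Convex.monotoneOn_of_hasDerivAt_nonneg {D : Set ℝ} (hD : Convex ℝ D) {f f' : ℝ → ℝ}
    (hf : ∀ x ∈ D, HasDerivAt f (f' x) x) (hf' : ∀ x ∈ D, 0 ≤ f' x) : MonotoneOn f D :=
  monotoneOn_of_hasDerivWithinAt_nonneg hD (fun x hx => (hf x hx).continuousAt.continuousWithinAt)
    (fun x hx => (hf x (interior_subset hx)).hasDerivWithinAt)
    (fun x hx => hf' x (interior_subset hx))

lemma Convex.antitoneOn_of_hasDerivAt_nonpos {D : Set ℝ} (hD : Convex ℝ D) {f f' : ℝ → ℝ}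
    (hf : ∀ x ∈ D, HasDerivAt f (f' x) x) (hf' : ∀ x ∈ D, f' x ≤ 0) : AntitoneOn f D :=
  antitoneOn_of_hasDerivWithinAt_nonpos hD (fun x hx => (hf x hx).continuousAt.continuousWithinAt)
    (fun x hx => (hf x (interior_subset hx)).hasDerivWithinAt)
    (fun x hx => hf' x (interior_subset hx))

lemma tangent_add_sq_le_of_hasDerivAt {g g' : ℝ → ℝ} {a b c m x : ℝ} (hc : c ∈ Icc a b)
    (hg : ∀ t ∈ Icc a b, HasDerivAt g (g' t) t)
    (hright : ∀ t ∈ Icc c b, m * (t - c) ≤ g' t - g' c)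
    (hleft : ∀ t ∈ Icc a c, g' t - g' c ≤ m * (t - c)) (hx : x ∈ Icc a b) :
    g c + g' c * (x - c) + m / 2 * (x - c) ^ 2 ≤ g x := by
  set v : ℝ → ℝ := fun t => g t - (g c + g' c * (t - c) + m / 2 * (t - c) ^ 2)
  have hv : ∀ t ∈ Icc a b, HasDerivAt v (g' t - (g' c + m * (t - c))) t := fun t ht => by
    have hlin : HasDerivAt (fun t => t - c) 1 t := (hasDerivAt_id' t).sub_const c
    refine (hg t ht).sub ((((hlin.const_mul (g' c)).const_add (g c)).add
      ((hlin.fun_pow 2).const_mul (m / 2))).congr_deriv ?_)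
    push_cast
    ring
  suffices v c ≤ v x by simpa [v] using this
  rcases le_total c x with hcx | hxc
  · refine (convex_Icc c b).monotoneOn_of_hasDerivAt_nonneg
      (fun t ht => hv t ⟨hc.1.trans ht.1, ht.2⟩) (fun t ht => ?_) ⟨le_rfl, hc.2⟩ ⟨hcx, hx.2⟩ hcx
    linarith [hright t ht]
  · refine (convex_Icc a c).antitoneOn_of_hasDerivAt_nonpos
      (fun t ht => hv t ⟨ht.1, ht.2.trans hc.2⟩) (fun t ht => ?_) ⟨hx.1, hxc⟩ ⟨hc.1, le_rfl⟩ hxc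
    linarith [hleft t ht]

lemma DifferentiableAt.hasDerivAt_prodMk_left {E : Type*} [NormedAddCommGroup E]
    [NormedSpace ℝ E] {F : ℝ × ℝ → E} {ρ θ : ℝ} (hF : DifferentiableAt ℝ F (ρ, θ)) :
    HasDerivAt (fun r => F (r, θ)) (fderiv ℝ F (ρ, θ) (1, 0)) ρ :=
  hF.hasFDerivAt.comp_hasDerivAt ρ ((hasDerivAt_id ρ).prodMk (hasDerivAt_const ρ θ))

lemma DifferentiableAt.hasDerivAt_prodMk_right {E : Type*} [NormedAddCommGroup E]
    [NormedSpace ℝ E] {F : ℝ × ℝ → E} {ρ θ : ℝ} (hF : DifferentiableAt ℝ F (ρ, θ)) :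
    HasDerivAt (fun t => F (ρ, t)) (fderiv ℝ F (ρ, θ) (0, 1)) θ :=
  hF.hasFDerivAt.comp_hasDerivAt θ ((hasDerivAt_const θ ρ).prodMk (hasDerivAt_id θ))

lemma fderiv_fst_mul_apply {s : ℝ × ℝ → ℝ} {x : ℝ × ℝ} (hs : DifferentiableAt ℝ s x)
    (v : ℝ × ℝ) :
    fderiv ℝ (fun y : ℝ × ℝ => y.1 * s y) x v =
      x.1 * (fderiv ℝ s x (1, 0) * v.1 + fderiv ℝ s x (0, 1) * v.2) + s x * v.1 := by
  rw [(hasFDerivAt_fst.fun_mul hs.hasFDerivAt).fderiv]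
  have hv : v = v.1 • ((1 : ℝ), (0 : ℝ)) + v.2 • ((0 : ℝ), (1 : ℝ)) := by ext <;> simp
  have hsv : fderiv ℝ s x v = fderiv ℝ s x (1, 0) * v.1 + fderiv ℝ s x (0, 1) * v.2 := by
    conv_lhs => rw [hv]
    rw [map_add, map_smul, map_smul, smul_eq_mul, smul_eq_mul]
    ring
  simp [hsv]

noncomputable def gibbsFreeEnergy (e s P : ℝ × ℝ → ℝ) (ρ θ : ℝ) : ℝ :=
  e (ρ, θ) - θ * s (ρ, θ) + P (ρ, θ) / ρ

section Thermodynamics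

variable {e s P : ℝ × ℝ → ℝ}

lemma hasDerivAt_ballisticH_temperature {ρ θ : ℝ} (C : ℝ) (he : DifferentiableAt ℝ e (ρ, θ))
    (hs : DifferentiableAt ℝ s (ρ, θ)) (hθ : θ ≠ 0)
    (gibbs : fderiv ℝ e (ρ, θ) (0, 1) = θ * fderiv ℝ s (ρ, θ) (0, 1)) :
    HasDerivAt (fun t => ballisticH e s C ρ t) (ρ * fderiv ℝ e (ρ, θ) (0, 1) / θ * (θ - C)) θ := by
  refine ((he.hasDerivAt_prodMk_right.const_mul ρ).sub
    ((hs.hasDerivAt_prodMk_right.const_mul ρ).const_mul C)).congr_deriv ?_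
  rw [gibbs]
  field_simp

lemma hasDerivAt_ballisticH_density {ρ θ : ℝ} (he : DifferentiableAt ℝ e (ρ, θ))
    (hs : DifferentiableAt ℝ s (ρ, θ)) (hρ : ρ ≠ 0)
    (gibbs : fderiv ℝ e (ρ, θ) (1, 0) = θ * fderiv ℝ s (ρ, θ) (1, 0) + P (ρ, θ) / ρ ^ 2) :
    HasDerivAt (fun r => ballisticH e s θ r θ) (gibbsFreeEnergy e s P ρ θ) ρ := by
  refine (((hasDerivAt_id' ρ).mul he.hasDerivAt_prodMk_left).sub
    (((hasDerivAt_id' ρ).mul hs.hasDerivAt_prodMk_left).const_mul θ)).congr_deriv ?_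
  rw [gibbsFreeEnergy, gibbs]
  field_simp
  ring

lemma hasDerivAt_gibbsFreeEnergy {ρ θ : ℝ} (he : DifferentiableAt ℝ e (ρ, θ))
    (hs : DifferentiableAt ℝ s (ρ, θ)) (hP : DifferentiableAt ℝ P (ρ, θ)) (hρ : ρ ≠ 0)
    (gibbs : fderiv ℝ e (ρ, θ) (1, 0) = θ * fderiv ℝ s (ρ, θ) (1, 0) + P (ρ, θ) / ρ ^ 2) :
    HasDerivAt (fun r => gibbsFreeEnergy e s P r θ) (fderiv ℝ P (ρ, θ) (1, 0) / ρ) ρ := by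
  refine ((he.hasDerivAt_prodMk_left.sub (hs.hasDerivAt_prodMk_left.const_mul θ)).add
    (hP.hasDerivAt_prodMk_left.div (hasDerivAt_id' ρ) hρ)).congr_deriv ?_
  rw [gibbs]
  field_simp
  ring

lemma ballisticH_add_sq_le_of_temperature {C ρ θ θ₀ θ₁ m : ℝ} (hθ₀ : 0 < θ₀)
    (he : ∀ t ∈ Icc θ₀ θ₁, DifferentiableAt ℝ e (ρ, t))
    (hs : ∀ t ∈ Icc θ₀ θ₁, DifferentiableAt ℝ s (ρ, t))
    (gibbs : ∀ t ∈ Icc θ₀ θ₁, fderiv ℝ e (ρ, t) (0, 1) = t * fderiv ℝ s (ρ, t) (0, 1))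
    (hm : ∀ t ∈ Icc θ₀ θ₁, m ≤ ρ * fderiv ℝ e (ρ, t) (0, 1) / t)
    (hC : C ∈ Icc θ₀ θ₁) (hθ : θ ∈ Icc θ₀ θ₁) :
    ballisticH e s C ρ C + m / 2 * (θ - C) ^ 2 ≤ ballisticH e s C ρ θ := by
  have key := tangent_add_sq_le_of_hasDerivAt hC
    (fun t ht => hasDerivAt_ballisticH_temperature C (he t ht) (hs t ht)
      (hθ₀.trans_le ht.1).ne' (gibbs t ht))
    (fun t ht => by
      simp only [sub_self, mul_zero, sub_zero]
      exact mul_le_mul_of_nonneg_right (hm t ⟨hC.1.trans ht.1, ht.2⟩) (sub_nonneg.2 ht.1))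
    (fun t ht => by
      simp only [sub_self, mul_zero, sub_zero]
      exact mul_le_mul_of_nonpos_right (hm t ⟨ht.1, ht.2.trans hC.2⟩) (sub_nonpos.2 ht.2))
    hθ
  simpa using key

lemma ballisticH_add_sq_le_of_density {θ ρ ρ' ρ₀ ρ₁ m : ℝ} (hρ₀ : 0 < ρ₀)
    (he : ∀ r ∈ Icc ρ₀ ρ₁, DifferentiableAt ℝ e (r, θ))
    (hs : ∀ r ∈ Icc ρ₀ ρ₁, DifferentiableAt ℝ s (r, θ))
    (hP : ∀ r ∈ Icc ρ₀ ρ₁, DifferentiableAt ℝ P (r, θ))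
    (gibbs : ∀ r ∈ Icc ρ₀ ρ₁,
      fderiv ℝ e (r, θ) (1, 0) = θ * fderiv ℝ s (r, θ) (1, 0) + P (r, θ) / r ^ 2)
    (hm : ∀ r ∈ Icc ρ₀ ρ₁, m ≤ fderiv ℝ P (r, θ) (1, 0) / r)
    (hρ' : ρ' ∈ Icc ρ₀ ρ₁) (hρ : ρ ∈ Icc ρ₀ ρ₁) :
    ballisticH e s θ ρ' θ + gibbsFreeEnergy e s P ρ' θ * (ρ - ρ') + m / 2 * (ρ - ρ') ^ 2 ≤
      ballisticH e s θ ρ θ := by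
  have hne : ∀ r ∈ Icc ρ₀ ρ₁, r ≠ 0 := fun r hr => (hρ₀.trans_le hr.1).ne'
  have hmono : MonotoneOn (fun r => gibbsFreeEnergy e s P r θ - m * r) (Icc ρ₀ ρ₁) :=
    (convex_Icc ρ₀ ρ₁).monotoneOn_of_hasDerivAt_nonneg
      (fun r hr => (hasDerivAt_gibbsFreeEnergy (he r hr) (hs r hr) (hP r hr) (hne r hr)
        (gibbs r hr)).sub ((hasDerivAt_id' r).const_mul m))
      (fun r hr => by linarith [hm r hr])
  exact tangent_add_sq_le_of_hasDerivAt hρ'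
    (fun r hr => hasDerivAt_ballisticH_density (he r hr) (hs r hr) (hne r hr) (gibbs r hr))
    (fun r hr => by linarith [hmono hρ' ⟨hρ'.1.trans hr.1, hr.2⟩ hr.1])
    (fun r hr => by linarith [hmono ⟨hr.1, hr.2.trans hρ'.2⟩ hρ' hr.2]) hρ

lemma sq_add_sq_le_relEntropy {ρ θ ρ' θ' ρ₀ ρ₁ θ₀ θ₁ m : ℝ} (hρ₀ : 0 < ρ₀) (hθ₀ : 0 < θ₀)
    (he : DifferentiableOn ℝ e (Ioi 0 ×ˢ Ioi 0)) (hs : DifferentiableOn ℝ s (Ioi 0 ×ˢ Ioi 0))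
    (hP : DifferentiableOn ℝ P (Ioi 0 ×ˢ Ioi 0))
    (gibbs1 : ∀ ρ θ : ℝ, 0 < ρ → 0 < θ →
      fderiv ℝ e (ρ, θ) (0, 1) = θ * fderiv ℝ s (ρ, θ) (0, 1))
    (gibbs2 : ∀ ρ θ : ℝ, 0 < ρ → 0 < θ →
      fderiv ℝ e (ρ, θ) (1, 0) = θ * fderiv ℝ s (ρ, θ) (1, 0) + P (ρ, θ) / ρ ^ 2)
    (hm : ∀ r ∈ Icc ρ₀ ρ₁, ∀ t ∈ Icc θ₀ θ₁,
      m ≤ r * fderiv ℝ e (r, t) (0, 1) / t ∧ m ≤ fderiv ℝ P (r, t) (1, 0) / r)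
    (hρ : ρ ∈ Icc ρ₀ ρ₁) (hθ : θ ∈ Icc θ₀ θ₁) (hρ' : ρ' ∈ Icc ρ₀ ρ₁) (hθ' : θ' ∈ Icc θ₀ θ₁) :
    m / 2 * ((ρ - ρ') ^ 2 + (θ - θ') ^ 2) ≤ relEntropy e s ρ θ ρ' θ' := by
  have pos : ∀ {r t}, r ∈ Icc ρ₀ ρ₁ → t ∈ Icc θ₀ θ₁ → 0 < r ∧ 0 < t := fun hr ht =>
    ⟨hρ₀.trans_le hr.1, hθ₀.trans_le ht.1⟩
  have diff : ∀ {F : ℝ × ℝ → ℝ}, DifferentiableOn ℝ F (Ioi 0 ×ˢ Ioi 0) →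
      ∀ {r t}, r ∈ Icc ρ₀ ρ₁ → t ∈ Icc θ₀ θ₁ → DifferentiableAt ℝ F (r, t) := fun hF _ _ hr ht =>
    hF.differentiableAt ((isOpen_Ioi.prod isOpen_Ioi).mem_nhds (pos hr ht))
  have htemp := ballisticH_add_sq_le_of_temperature hθ₀ (fun t ht => diff he hρ ht)
    (fun t ht => diff hs hρ ht) (fun t ht => gibbs1 ρ t (pos hρ ht).1 (pos hρ ht).2)
    (fun t ht => (hm ρ hρ t ht).1) hθ' hθ
  have hdens := ballisticH_add_sq_le_of_density hρ₀ (fun r hr => diff he hr hθ')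
    (fun r hr => diff hs hr hθ') (fun r hr => diff hP hr hθ')
    (fun r hr => gibbs2 r θ' (pos hr hθ').1 (pos hr hθ').2) (fun r hr => (hm r hr θ' hθ').2) hρ' hρ
  rw [relEntropy, (hasDerivAt_ballisticH_density (diff he hρ' hθ') (diff hs hρ' hθ')
    (pos hρ' hθ').1.ne' (gibbs2 ρ' θ' (pos hρ' hθ').1 (pos hρ' hθ').2)).deriv]
  linarith

end Thermodynamics

/-- under the Gibbs relation and thermodynamic stability, on every
compact set `K = [ρ₀′,ρ₁′] × [θ₀′,θ₁′] ⊂ (0,∞)²` there is `c > 0` with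
`|ρ(s(ρ,θ) − s(ρ′,θ′)) − ρ′(∂_ρ s(ρ′,θ′)(ρ − ρ′) + ∂_θ s(ρ′,θ′)(θ − θ′))| ≤ c·Γ(ρ,θ|ρ′,θ′)`
for all `(ρ,θ), (ρ′,θ′) ∈ K`. -/
theorem entropy_taylor_remainder_relEntropy_bound (e s P : ℝ × ℝ → ℝ)
    (he : ContDiffOn ℝ 2 e (Set.Ioi (0 : ℝ) ×ˢ Set.Ioi (0 : ℝ)))
    (hs : ContDiffOn ℝ 2 s (Set.Ioi (0 : ℝ) ×ˢ Set.Ioi (0 : ℝ)))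
    (hP : ContDiffOn ℝ 1 P (Set.Ioi (0 : ℝ) ×ˢ Set.Ioi (0 : ℝ)))
    (gibbs1 : ∀ ρ θ : ℝ, 0 < ρ → 0 < θ →
      fderiv ℝ e (ρ, θ) (0, 1) = θ * fderiv ℝ s (ρ, θ) (0, 1))
    (gibbs2 : ∀ ρ θ : ℝ, 0 < ρ → 0 < θ →
      fderiv ℝ e (ρ, θ) (1, 0) = θ * fderiv ℝ s (ρ, θ) (1, 0) + P (ρ, θ) / ρ ^ 2)
    (hstabP : ∀ ρ θ : ℝ, 0 < ρ → 0 < θ → 0 < fderiv ℝ P (ρ, θ) (1, 0))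
    (hstabe : ∀ ρ θ : ℝ, 0 < ρ → 0 < θ → 0 < fderiv ℝ e (ρ, θ) (0, 1))
    (ρ₀' ρ₁' θ₀' θ₁' : ℝ) (hρ₀ : 0 < ρ₀') (hρ₁ : ρ₀' ≤ ρ₁') (hθ₀ : 0 < θ₀') (hθ₁ : θ₀' ≤ θ₁') :
    ∃ c : ℝ, 0 < c ∧
      ∀ ρ θ ρ' θ' : ℝ, ρ ∈ Set.Icc ρ₀' ρ₁' → θ ∈ Set.Icc θ₀' θ₁' →
        ρ' ∈ Set.Icc ρ₀' ρ₁' → θ' ∈ Set.Icc θ₀' θ₁' →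
        |ρ * (s (ρ, θ) - s (ρ', θ')) -
            ρ' * (fderiv ℝ s (ρ', θ') (1, 0) * (ρ - ρ') +
              fderiv ℝ s (ρ', θ') (0, 1) * (θ - θ'))| ≤
          c * relEntropy e s ρ θ ρ' θ' := by
  have hU : IsOpen (Ioi (0 : ℝ) ×ˢ Ioi (0 : ℝ)) := isOpen_Ioi.prod isOpen_Ioi
  set K := Icc ρ₀' ρ₁' ×ˢ Icc θ₀' θ₁'
  have hKU : K ⊆ Ioi 0 ×ˢ Ioi 0 :=
    prod_mono (Icc_subset_Ioi_iff hρ₁ |>.2 hρ₀) (Icc_subset_Ioi_iff hθ₁ |>.2 hθ₀)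
  have hK : IsCompact K := isCompact_Icc.prod isCompact_Icc
  have hcont_e : ContinuousOn (fun x : ℝ × ℝ => x.1 * fderiv ℝ e x (0, 1) / x.2) K :=
    (continuousOn_fst.mul (((he.continuousOn_fderiv_of_isOpen hU one_le_two).mono hKU).clm_apply
      continuousOn_const)).div continuousOn_snd fun x hx => (hKU hx).2.ne'
  have hcont_P : ContinuousOn (fun x : ℝ × ℝ => fderiv ℝ P x (1, 0) / x.1) K :=
    (((hP.continuousOn_fderiv_of_isOpen hU le_rfl).mono hKU).clm_apply continuousOn_const).div
      continuousOn_fst fun x hx => (hKU hx).1.ne'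
  obtain ⟨m, hm, hmK⟩ := hK.exists_pos_forall_le (hcont_e.inf hcont_P) (by
    rintro ⟨r, t⟩ hx
    obtain ⟨hr, ht⟩ := hKU hx
    exact lt_inf_iff.2 ⟨div_pos (mul_pos hr (hstabe r t hr ht)) ht, div_pos (hstabP r t hr ht) hr⟩)
  obtain ⟨M, hM, hTaylor⟩ := (contDiff_fst.contDiffOn.mul hs).exists_norm_taylor_remainder_le hU
    hK ((convex_Icc _ _).prod (convex_Icc _ _)) hKU
  refine ⟨2 * M / m, by positivity, fun ρ θ ρ' θ' hρ hθ hρ' hθ' => ?_⟩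
  have hlow := sq_add_sq_le_relEntropy hρ₀ hθ₀ (he.differentiableOn two_ne_zero)
    (hs.differentiableOn two_ne_zero) (hP.differentiableOn one_ne_zero) gibbs1 gibbs2
    (fun r hr t ht => le_inf_iff.1 (hmK (r, t) ⟨hr, ht⟩)) hρ hθ hρ' hθ'
  have hs' : DifferentiableAt ℝ s (ρ', θ') :=
    (hs.differentiableOn two_ne_zero).differentiableAt (hU.mem_nhds (hKU ⟨hρ', hθ'⟩))
  calc _ = ‖ρ * s (ρ, θ) - ρ' * s (ρ', θ') -
        fderiv ℝ (fun x : ℝ × ℝ => x.1 * s x) (ρ', θ') ((ρ, θ) - (ρ', θ'))‖ := by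
        rw [Real.norm_eq_abs, fderiv_fst_mul_apply hs', Prod.mk_sub_mk]
        ring_nf
    _ ≤ M * ‖(ρ, θ) - (ρ', θ')‖ ^ 2 := hTaylor (ρ', θ') ⟨hρ', hθ'⟩ (ρ, θ) ⟨hρ, hθ⟩
    _ ≤ M * ((ρ - ρ') ^ 2 + (θ - θ') ^ 2) := by
        rw [Prod.mk_sub_mk]
        gcongr
        exact Prod.norm_sq_le_sq_add_sq _ _
    _ = 2 * M / m * (m / 2 * ((ρ - ρ') ^ 2 + (θ - θ') ^ 2)) := by field_simp
    _ ≤ 2 * M / m * relEntropy e s ρ θ ρ' θ' := by gcongr
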